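/- arXiv:2105.03380 — 7 statements merged into one kernel-verified Lean document; each statement's English description precedes it below -/
import Mathlib

section
/- If a two-user discrete memoryless MAC W(z|x,y) is 2-overwritable, i.e., there exists a conditional distribution P_{X'|X,Y} such that for all x, y, y', z: Σ_{x'} P_{X'|X,Y}(x'|x,y) W(z|x',y') = W(z|x,y), then W is 2-spoofable: there exist conditional distributions Q_{X|X̃,Ỹ} and Q_{Y|Ỹ,Y'} such that for all x̃, ỹ, y', z: Σ_x Q_{X|X̃,Ỹ}(x|x̃,ỹ) W(z|x,y') = Σ_x Q_{X|X̃,Ỹ}(x|x̃,y') W(z|x,ỹ) = Σ_y Q_{Y|Ỹ,Y'}(y|ỹ,y') W(z|x̃,y). In particular, one may take Q_{X|X̃,Ỹ}(x|x̃,ỹ) := Σ_y Q_Y(y) P_{X'|X,Y}(x|x̃,y) for an arbitrary distribution Q_Y on 𝒴, and Q_{Y|Ỹ,Y'}(y|ỹ,y') := Q_Y(y). -/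
/-- A 2-overwritable MAC is 2-spoofable.
`P x y x'` denotes P_{X'|X,Y}(x'|x,y); `QX xt yt x` denotes Q_{X|X̃,Ỹ}(x|x̃,ỹ);
`QY yt y' y` denotes Q_{Y|Ỹ,Y'}(y|ỹ,y'). -/
theorem overwritable_implies_spoofable
    {𝒳 𝒴 𝒵 : Type*} [Fintype 𝒳] [Fintype 𝒴] [Fintype 𝒵] [Nonempty 𝒴]
    (W : 𝒳 → 𝒴 → 𝒵 → ℝ)
    (hW0 : ∀ x y z, 0 ≤ W x y z) (hW1 : ∀ x y, ∑ z, W x y z = 1)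
    (P : 𝒳 → 𝒴 → 𝒳 → ℝ)
    (hP0 : ∀ x y x', 0 ≤ P x y x') (hP1 : ∀ x y, ∑ x', P x y x' = 1)
    (hover : ∀ x y y' z, ∑ x', P x y x' * W x' y' z = W x y z) :
    ∃ (QX : 𝒳 → 𝒴 → 𝒳 → ℝ) (QY : 𝒴 → 𝒴 → 𝒴 → ℝ),
      (∀ xt yt x, 0 ≤ QX xt yt x) ∧ (∀ xt yt, ∑ x, QX xt yt x = 1) ∧
      (∀ yt y' y, 0 ≤ QY yt y' y) ∧ (∀ yt y', ∑ y, QY yt y' y = 1) ∧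
      (∀ xt yt y' z,
        ∑ x, QX xt yt x * W x y' z = ∑ x, QX xt y' x * W x yt z ∧
        ∑ x, QX xt yt x * W x y' z = ∑ y, QY yt y' y * W xt y z) := by
  set q : 𝒴 → ℝ := fun _ => (Fintype.card 𝒴 : ℝ)⁻¹ with hq
  have hcard : (0:ℝ) < (Fintype.card 𝒴 : ℝ) := by
    exact_mod_cast Fintype.card_pos
  have hq0 : ∀ y, 0 ≤ q y := fun y => inv_nonneg.mpr hcard.le
  have hq1 : ∑ y : 𝒴, q y = 1 := by
    simp [hq, Finset.sum_const, Finset.card_univ, mul_inv_cancel₀ hcard.ne']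
  refine ⟨fun xt _ x => ∑ y, q y * P xt y x, fun _ _ y => q y,
    ?_, ?_, fun _ _ y => hq0 y, fun _ _ => hq1, ?_⟩
  · intro xt yt x
    exact Finset.sum_nonneg fun y _ => mul_nonneg (hq0 y) (hP0 xt y x)
  · intro xt yt
    rw [Finset.sum_comm]
    simp [← Finset.mul_sum, hP1, hq1]
  · intro xt yt y' z
    have key : ∀ y'' : 𝒴, ∑ x, (∑ y, q y * P xt y x) * W x y'' z
        = ∑ y, q y * W xt y z := by
      intro y''
      simp only [Finset.sum_mul, mul_assoc]
      rw [Finset.sum_comm]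
      exact Finset.sum_congr rfl fun y _ => by
        rw [← Finset.mul_sum, hover xt y y'' z]
    exact ⟨(key y').trans (key yt).symm, key y'⟩
end

section
/- The binary erasure MAC, with inputs X, Y ∈ {0,1} and output Z = X + Y ∈ {0,1,2} (real addition, deterministic channel), is not 1-spoofable: there do not exist conditional distributions Q_{Y|X̃,Ỹ} and Q_{X|X̃,X'} such that for all x', x̃, ỹ, z: Σ_y Q_{Y|X̃,Ỹ}(y|x̃,ỹ) W(z|x',y) = Σ_y Q_{Y|X̃,Ỹ}(y|x',ỹ) W(z|x̃,y) = Σ_x Q_{X|X̃,X'}(x|x̃,x') W(z|x,ỹ). -/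
/-- The binary erasure MAC: Z = X + Y with real (integer) addition. -/
def erasureMAC (x y : Fin 2) (z : Fin 3) : ℝ :=
  if (z : ℕ) = (x : ℕ) + (y : ℕ) then 1 else 0

/-- the binary erasure MAC is not 1-spoofable.
`QY xt yt y` denotes Q_{Y|X̃,Ỹ}(y|x̃,ỹ); `QX xt x' x` denotes Q_{X|X̃,X'}(x|x̃,x'). -/
theorem erasureMAC_not_one_spoofable :
    ¬ ∃ (QY : Fin 2 → Fin 2 → Fin 2 → ℝ) (QX : Fin 2 → Fin 2 → Fin 2 → ℝ),
      (∀ xt yt y, 0 ≤ QY xt yt y) ∧ (∀ xt yt, ∑ y, QY xt yt y = 1) ∧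
      (∀ xt x' x, 0 ≤ QX xt x' x) ∧ (∀ xt x', ∑ x, QX xt x' x = 1) ∧
      (∀ (x' xt yt : Fin 2) (z : Fin 3),
        ∑ y, QY xt yt y * erasureMAC x' y z = ∑ y, QY x' yt y * erasureMAC xt y z ∧
        ∑ y, QY xt yt y * erasureMAC x' y z = ∑ x, QX xt x' x * erasureMAC x yt z) := by
  rintro ⟨QY, QX, _, h2, _, _, h5⟩
  have e1 := (h5 0 1 0 0).1
  have e2 := (h5 0 1 0 0).2
  have e3 := (h5 0 1 1 0).1
  have e4 := (h5 0 1 1 1).2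
  have s := h2 1 1
  simp [Fin.sum_univ_two, erasureMAC] at e1 e2 e3 e4 s
  linarith
end

section
/- The binary erasure MAC is not 2-spoofable: there do not exist conditional distributions Q_{X|X̃,Ỹ} and Q_{Y|Ỹ,Y'} such that for all x̃, ỹ, y', z: Σ_x Q_{X|X̃,Ỹ}(x|x̃,ỹ) W(z|x,y') = Σ_x Q_{X|X̃,Ỹ}(x|x̃,y') W(z|x,ỹ) = Σ_y Q_{Y|Ỹ,Y'}(y|ỹ,y') W(z|x̃,y). -/
/-- the binary erasure MAC is not 2-spoofable.
`QX xt yt x` denotes Q_{X|X̃,Ỹ}(x|x̃,ỹ); `QY yt y' y` denotes Q_{Y|Ỹ,Y'}(y|ỹ,y'). -/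
theorem erasureMAC_not_two_spoofable :
    ¬ ∃ (QX : Fin 2 → Fin 2 → Fin 2 → ℝ) (QY : Fin 2 → Fin 2 → Fin 2 → ℝ),
      (∀ xt yt x, 0 ≤ QX xt yt x) ∧ (∀ xt yt, ∑ x, QX xt yt x = 1) ∧
      (∀ yt y' y, 0 ≤ QY yt y' y) ∧ (∀ yt y', ∑ y, QY yt y' y = 1) ∧
      (∀ (xt yt y' : Fin 2) (z : Fin 3),
        ∑ x, QX xt yt x * erasureMAC x y' z = ∑ x, QX xt y' x * erasureMAC x yt z ∧
        ∑ x, QX xt yt x * erasureMAC x y' z = ∑ y, QY yt y' y * erasureMAC xt y z) := by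
  rintro ⟨QX, QY, hX0, hX1, hY0, hY1, h⟩
  have e2 := (h 1 0 1 2).1
  have e3 := (h 0 0 1 0).2
  have e4 := (h 1 0 1 1).2
  have s1 := hX1 1 0
  simp [erasureMAC, Fin.sum_univ_two] at e2 e3 e4 s1
  linarith
end

section
/- The parallel MAC (Z₁,Z₂) = (X₁+Y₁, X₂⊕Y₂) is not 2-overwritable: no conditional distribution P_{X'|X,Y} on {0,1}² satisfies Σ_{x'} P_{X'|X,Y}(x'|x,y) W(z|x',y') = W(z|x,y) for all x, y, y', z. (Taking x = y = (1,1), z = (2,0), and y' = (0,0) yields LHS 0 but RHS 1.) -/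
/-- The parallel MAC (Z₁,Z₂) = (X₁+Y₁, X₂⊕Y₂) with inputs in {0,1}². -/
def parallelMAC (x y : Fin 2 × Fin 2) (z : Fin 3 × Fin 2) : ℝ :=
  if (z.1 : ℕ) = (x.1 : ℕ) + (y.1 : ℕ) ∧ z.2 = x.2 + y.2 then 1 else 0

/-- the parallel MAC is not 2-overwritable.
`P x y x'` denotes P_{X'|X,Y}(x'|x,y). -/
theorem parallelMAC_not_two_overwritable :
    ¬ ∃ P : Fin 2 × Fin 2 → Fin 2 × Fin 2 → Fin 2 × Fin 2 → ℝ,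
      (∀ x y x', 0 ≤ P x y x') ∧ (∀ x y, ∑ x', P x y x' = 1) ∧
      (∀ x y y' z, ∑ x', P x y x' * parallelMAC x' y' z = parallelMAC x y z) := by
  rintro ⟨P, -, -, h⟩
  have := h (1,1) (1,1) (0,0) (2,0)
  simp only [parallelMAC] at this
  simp [Fintype.sum_prod_type, Fin.sum_univ_succ] at this
end

section
/- Let W be a 1-spoofable MAC and (f₁, f₂, φ) any (N₁, N₂, n) adversary identifying code with N₁ ≥ 2. Then the average probability of error P_e(f₁,f₂,φ) = max{P_{e,0}, P_{e,mal1}, P_{e,mal2}} is at least 1/12, where P_{e,0} is the average error probability when both users are honest, P_{e,mal1} (resp. P_{e,mal2}) is the worst-case over adversarial input sequences x ∈ 𝒳ⁿ (resp. y ∈ 𝒴ⁿ) of the average error probability requiring the honest user's decoded message to be correct or the decoder to output the blame symbol against the adversarial user. -/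
open scoped Classical

/-- Probability under the n-fold product channel `Wⁿ` of an event `E ⊆ 𝒵ⁿ`,
given input sequences `x`, `y`. -/
noncomputable def Wn {𝒳 𝒴 𝒵 : Type*} [Fintype 𝒵] (W : 𝒳 → 𝒴 → 𝒵 → ℝ) {n : ℕ}
    (x : Fin n → 𝒳) (y : Fin n → 𝒴) (E : Finset (Fin n → 𝒵)) : ℝ :=
  ∑ z ∈ E, ∏ t, W (x t) (y t) (z t)

lemma sum_fn_prod {n : ℕ} {α : Type*} [Fintype α] (g : Fin n → α → ℝ) :
    ∑ y : Fin n → α, ∏ t, g t (y t) = ∏ t, ∑ a, g t a := by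
  rw [Finset.prod_univ_sum, Fintype.piFinset_univ]

lemma mix_eq {𝒴 𝒵 : Type*} [Fintype 𝒴] [Fintype 𝒵] {n : ℕ}
    (K : Fin n → 𝒴 → ℝ) (V : Fin n → 𝒴 → 𝒵 → ℝ) (E : Finset (Fin n → 𝒵)) :
    ∑ y : Fin n → 𝒴, (∏ t, K t (y t)) * (∑ z ∈ E, ∏ t, V t (y t) (z t))
      = ∑ z ∈ E, ∏ t, ∑ a, K t a * V t a (z t) := by
  simp_rw [Finset.mul_sum]
  rw [Finset.sum_comm]
  refine Finset.sum_congr rfl fun z _ => ?_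
  rw [← sum_fn_prod (fun t a => K t a * V t a (z t))]
  exact Finset.sum_congr rfl fun y _ => (Finset.prod_mul_distrib).symm

lemma mix_le {α : Type*} [Fintype α] (π g : α → ℝ) (hπ0 : ∀ a, 0 ≤ π a)
    (hπ1 : ∑ a, π a = 1) {c : ℝ} (hg : ∀ a, g a ≤ c) :
    ∑ a, π a * g a ≤ c := by
  calc ∑ a, π a * g a ≤ ∑ a, π a * c :=
        Finset.sum_le_sum fun a _ => mul_le_mul_of_nonneg_left (hg a) (hπ0 a)
    _ = c := by rw [← Finset.sum_mul, hπ1, one_mul]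

lemma sum_cover3 {α : Type*} [Fintype α] (f : α → ℝ) (hf : ∀ a, 0 ≤ f a)
    (s t u : Finset α) (h : ∀ a, a ∈ s ∨ a ∈ t ∨ a ∈ u) :
    ∑ a, f a ≤ ∑ a ∈ s, f a + ∑ a ∈ t, f a + ∑ a ∈ u, f a := by
  have h1 : ∀ E : Finset α, ∑ a ∈ E, f a = ∑ a, if a ∈ E then f a else 0 := by
    intro E
    rw [Finset.sum_ite_mem, Finset.univ_inter]
  rw [h1 s, h1 t, h1 u, ← Finset.sum_add_distrib, ← Finset.sum_add_distrib]
  refine Finset.sum_le_sum fun a _ => ?_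
  have h0 : ∀ E : Finset α, 0 ≤ if a ∈ E then f a else 0 := by
    intro E; split <;> [exact hf a; exact le_refl 0]
  rcases h a with ha | ha | ha
  · rw [if_pos ha]; have := h0 t; have := h0 u; linarith
  · rw [if_pos ha]; have := h0 s; have := h0 u; linarith
  · rw [if_pos ha]; have := h0 s; have := h0 t; linarith

/-- for a 1-spoofable MAC, any (N₁,N₂,n) adversary identifying
code with N₁ ≥ 2 has average probability of error at least 1/12.
The decoder outputs either a message pair (`Sum.inl`) or blames user 1
(`Sum.inr 0`) or user 2 (`Sum.inr 1`). -/
theorem one_spoofable_converse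
    {𝒳 𝒴 𝒵 : Type*} [Fintype 𝒳] [Fintype 𝒴] [Fintype 𝒵]
    [Nonempty 𝒳] [Nonempty 𝒴]
    (W : 𝒳 → 𝒴 → 𝒵 → ℝ)
    (hW0 : ∀ x y z, 0 ≤ W x y z) (hW1 : ∀ x y, ∑ z, W x y z = 1)
    -- 1-spoofability
    (QY : 𝒳 → 𝒴 → 𝒴 → ℝ) (QX : 𝒳 → 𝒳 → 𝒳 → ℝ)
    (hQY0 : ∀ xt yt y, 0 ≤ QY xt yt y) (hQY1 : ∀ xt yt, ∑ y, QY xt yt y = 1)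
    (hQX0 : ∀ xt x' x, 0 ≤ QX xt x' x) (hQX1 : ∀ xt x', ∑ x, QX xt x' x = 1)
    (hspoof : ∀ x' xt yt z,
        ∑ y, QY xt yt y * W x' y z = ∑ y, QY x' yt y * W xt y z ∧
        ∑ y, QY xt yt y * W x' y z = ∑ x, QX xt x' x * W x yt z)
    -- the code
    (N₁ N₂ n : ℕ) (hN₁ : 2 ≤ N₁) (hN₂ : 1 ≤ N₂)
    (f₁ : Fin N₁ → Fin n → 𝒳) (f₂ : Fin N₂ → Fin n → 𝒴)
    (φ : (Fin n → 𝒵) → (Fin N₁ × Fin N₂) ⊕ Fin 2) :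
    (1 : ℝ) / 12 ≤
      max ((1 / ((N₁ : ℝ) * N₂)) * ∑ m₁, ∑ m₂,
            Wn W (f₁ m₁) (f₂ m₂)
              {z | φ z ≠ Sum.inl (m₁, m₂)})
        (max
          (Finset.univ.sup' Finset.univ_nonempty (fun x : Fin n → 𝒳 =>
            (1 / (N₂ : ℝ)) * ∑ m₂,
              Wn W x (f₂ m₂)
                {z | (∀ m₁, φ z ≠ Sum.inl (m₁, m₂)) ∧ φ z ≠ Sum.inr 0}))
          (Finset.univ.sup' Finset.univ_nonempty (fun y : Fin n → 𝒴 =>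
            (1 / (N₁ : ℝ)) * ∑ m₁,
              Wn W (f₁ m₁) y
                {z | (∀ m₂, φ z ≠ Sum.inl (m₁, m₂)) ∧ φ z ≠ Sum.inr 1}))) := by
  refine le_trans ?_ (le_max_right _ _)
  -- events
  set E1 : Fin N₂ → Finset (Fin n → 𝒵) :=
    fun m₂ => {z | (∀ m₁, φ z ≠ Sum.inl (m₁, m₂)) ∧ φ z ≠ Sum.inr 0} with hE1
  set E2 : Fin N₁ → Finset (Fin n → 𝒵) :=
    fun m₁ => {z | (∀ m₂, φ z ≠ Sum.inl (m₁, m₂)) ∧ φ z ≠ Sum.inr 1} with hE2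
  set A : ℝ := Finset.univ.sup' Finset.univ_nonempty (fun x : Fin n → 𝒳 =>
      (1 / (N₂ : ℝ)) * ∑ m₂, Wn W x (f₂ m₂) (E1 m₂)) with hA
  set B : ℝ := Finset.univ.sup' Finset.univ_nonempty (fun y : Fin n → 𝒴 =>
      (1 / (N₁ : ℝ)) * ∑ m₁, Wn W (f₁ m₁) y (E2 m₁)) with hB
  show (1:ℝ)/12 ≤ max A B
  have hN₁pos : (0:ℝ) < N₁ := by
    have : (0:ℕ) < N₁ := by omega
    exact_mod_cast this
  have hN₂pos : (0:ℝ) < N₂ := by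
    have : (0:ℕ) < N₂ := by omega
    exact_mod_cast this
  -- common distribution
  set P : Fin N₁ → Fin N₁ → Fin N₂ → (Fin n → 𝒵) → ℝ :=
    fun m₁ m₁' m₂ z => ∏ t, ∑ y, QY (f₁ m₁ t) (f₂ m₂ t) y * W (f₁ m₁' t) y (z t)
    with hP
  have hPnn : ∀ m₁ m₁' m₂ z, 0 ≤ P m₁ m₁' m₂ z := by
    intro m₁ m₁' m₂ z
    refine Finset.prod_nonneg fun t _ => Finset.sum_nonneg fun y _ => ?_
    exact mul_nonneg (hQY0 _ _ _) (hW0 _ _ _)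
  have hPsym : ∀ m₁ m₁' m₂ z, P m₁ m₁' m₂ z = P m₁' m₁ m₂ z := by
    intro m₁ m₁' m₂ z
    exact Finset.prod_congr rfl fun t _ =>
      (hspoof (f₁ m₁' t) (f₁ m₁ t) (f₂ m₂ t) (z t)).1
  have hPtotal : ∀ m₁ m₁' m₂, ∑ z : Fin n → 𝒵, P m₁ m₁' m₂ z = 1 := by
    intro m₁ m₁' m₂
    rw [hP]
    rw [sum_fn_prod (fun t zt => ∑ y, QY (f₁ m₁ t) (f₂ m₂ t) y * W (f₁ m₁' t) y zt)]
    refine Finset.prod_eq_one fun t _ => ?_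
    rw [Finset.sum_comm]
    simp_rw [← Finset.mul_sum, hW1, mul_one]
    exact hQY1 _ _
  -- mixture representations
  have hMixY : ∀ m₁ m₁' m₂ (E : Finset (Fin n → 𝒵)),
      ∑ z ∈ E, P m₁ m₁' m₂ z
        = ∑ y : Fin n → 𝒴,
            (∏ t, QY (f₁ m₁ t) (f₂ m₂ t) (y t)) * Wn W (f₁ m₁') y E := by
    intro m₁ m₁' m₂ E
    exact (mix_eq (fun t a => QY (f₁ m₁ t) (f₂ m₂ t) a)
      (fun t a zt => W (f₁ m₁' t) a zt) E).symm
  have hPX : ∀ m₁ m₁' m₂ z,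
      P m₁ m₁' m₂ z = ∏ t, ∑ x, QX (f₁ m₁ t) (f₁ m₁' t) x * W x (f₂ m₂ t) (z t) := by
    intro m₁ m₁' m₂ z
    exact Finset.prod_congr rfl fun t _ =>
      (hspoof (f₁ m₁' t) (f₁ m₁ t) (f₂ m₂ t) (z t)).2
  have hMixX : ∀ m₁ m₁' m₂ (E : Finset (Fin n → 𝒵)),
      ∑ z ∈ E, P m₁ m₁' m₂ z
        = ∑ x : Fin n → 𝒳,
            (∏ t, QX (f₁ m₁ t) (f₁ m₁' t) (x t)) * Wn W x (f₂ m₂) E := by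
    intro m₁ m₁' m₂ E
    rw [Finset.sum_congr rfl (fun z _ => hPX m₁ m₁' m₂ z)]
    exact (mix_eq (fun t a => QX (f₁ m₁ t) (f₁ m₁' t) a)
      (fun t a zt => W a (f₂ m₂ t) zt) E).symm
  -- the mixing weights are probability distributions
  have hπY0 : ∀ m₁ m₂ (y : Fin n → 𝒴), 0 ≤ ∏ t, QY (f₁ m₁ t) (f₂ m₂ t) (y t) :=
    fun m₁ m₂ y => Finset.prod_nonneg fun t _ => hQY0 _ _ _
  have hπY1 : ∀ m₁ m₂, ∑ y : Fin n → 𝒴, ∏ t, QY (f₁ m₁ t) (f₂ m₂ t) (y t) = 1 := by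
    intro m₁ m₂
    rw [sum_fn_prod (fun t a => QY (f₁ m₁ t) (f₂ m₂ t) a)]
    exact Finset.prod_eq_one fun t _ => hQY1 _ _
  have hπX0 : ∀ m₁ m₁' (x : Fin n → 𝒳), 0 ≤ ∏ t, QX (f₁ m₁ t) (f₁ m₁' t) (x t) :=
    fun m₁ m₁' x => Finset.prod_nonneg fun t _ => hQX0 _ _ _
  have hπX1 : ∀ m₁ m₁', ∑ x : Fin n → 𝒳, ∏ t, QX (f₁ m₁ t) (f₁ m₁' t) (x t) = 1 := by
    intro m₁ m₁'
    rw [sum_fn_prod (fun t a => QX (f₁ m₁ t) (f₁ m₁' t) a)]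
    exact Finset.prod_eq_one fun t _ => hQX1 _ _
  -- sup bounds
  have hAx : ∀ x : Fin n → 𝒳, ∑ m₂, Wn W x (f₂ m₂) (E1 m₂) ≤ (N₂:ℝ) * A := by
    intro x
    have h := Finset.le_sup' (f := fun x : Fin n → 𝒳 =>
      (1 / (N₂ : ℝ)) * ∑ m₂, Wn W x (f₂ m₂) (E1 m₂)) (Finset.mem_univ x)
    rw [← hA] at h
    have h2 : ∑ m₂, Wn W x (f₂ m₂) (E1 m₂)
        = (N₂:ℝ) * ((1 / (N₂ : ℝ)) * ∑ m₂, Wn W x (f₂ m₂) (E1 m₂)) := by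
      field_simp
    rw [h2]
    exact mul_le_mul_of_nonneg_left h hN₂pos.le
  have hBy : ∀ y : Fin n → 𝒴, ∑ m₁, Wn W (f₁ m₁) y (E2 m₁) ≤ (N₁:ℝ) * B := by
    intro y
    have h := Finset.le_sup' (f := fun y : Fin n → 𝒴 =>
      (1 / (N₁ : ℝ)) * ∑ m₁, Wn W (f₁ m₁) y (E2 m₁)) (Finset.mem_univ y)
    rw [← hB] at h
    have h2 : ∑ m₁, Wn W (f₁ m₁) y (E2 m₁)
        = (N₁:ℝ) * ((1 / (N₁ : ℝ)) * ∑ m₁, Wn W (f₁ m₁) y (E2 m₁)) := by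
      field_simp
    rw [h2]
    exact mul_le_mul_of_nonneg_left h hN₁pos.le
  -- key term bounds
  have hTerm1 : ∀ m₁ m₂, ∑ m₁', ∑ z ∈ E2 m₁', P m₁ m₁' m₂ z ≤ (N₁:ℝ) * B := by
    intro m₁ m₂
    have heq : ∑ m₁', ∑ z ∈ E2 m₁', P m₁ m₁' m₂ z
        = ∑ y : Fin n → 𝒴, (∏ t, QY (f₁ m₁ t) (f₂ m₂ t) (y t))
            * (∑ m₁', Wn W (f₁ m₁') y (E2 m₁')) := by
      simp_rw [hMixY, Finset.mul_sum]
      rw [Finset.sum_comm]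
    rw [heq]
    exact mix_le _ _ (hπY0 m₁ m₂) (hπY1 m₁ m₂) (fun y => hBy y)
  have hTerm3 : ∀ m₁ m₁', ∑ m₂, ∑ z ∈ E1 m₂, P m₁ m₁' m₂ z ≤ (N₂:ℝ) * A := by
    intro m₁ m₁'
    have heq : ∑ m₂, ∑ z ∈ E1 m₂, P m₁ m₁' m₂ z
        = ∑ x : Fin n → 𝒳, (∏ t, QX (f₁ m₁ t) (f₁ m₁' t) (x t))
            * (∑ m₂, Wn W x (f₂ m₂) (E1 m₂)) := by
      simp_rw [hMixX, Finset.mul_sum]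
      rw [Finset.sum_comm]
    rw [heq]
    exact mix_le _ _ (hπX0 m₁ m₁') (hπX1 m₁ m₁') (fun x => hAx x)
  -- coverage
  have hCover : ∀ (m₁ m₁' : Fin N₁), m₁ ≠ m₁' → ∀ m₂ : Fin N₂,
      1 ≤ ∑ z ∈ E2 m₁, P m₁ m₁' m₂ z + ∑ z ∈ E2 m₁', P m₁ m₁' m₂ z
          + ∑ z ∈ E1 m₂, P m₁ m₁' m₂ z := by
    intro m₁ m₁' hne m₂
    have hcov : ∀ z : Fin n → 𝒵, z ∈ E2 m₁ ∨ z ∈ E2 m₁' ∨ z ∈ E1 m₂ := by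
      intro z
      simp only [hE1, hE2, Finset.mem_filter, Finset.mem_univ, true_and]
      rcases hφ : φ z with ⟨a, b⟩ | j
      · by_cases hab : a = m₁
        · right; left
          refine ⟨fun m₂' h' => ?_, by simp⟩
          have ha' : a = m₁' := congrArg Prod.fst (Sum.inl.inj h')
          exact hne (hab ▸ ha')
        · left
          refine ⟨fun m₂' h' => ?_, by simp⟩
          exact hab (congrArg Prod.fst (Sum.inl.inj h'))
      · fin_cases j
        · left
          exact ⟨fun m₂' h' => by simp at h', by simp⟩
        · right; right
          refine ⟨fun m₁'' h' => by simp at h', ?_⟩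
          simp only [ne_eq, Sum.inr.injEq]
          decide
    have h := sum_cover3 (P m₁ m₁' m₂) (hPnn m₁ m₁' m₂) (E2 m₁) (E2 m₁') (E1 m₂) hcov
    rw [hPtotal m₁ m₁' m₂] at h
    exact h
  -- the three grand sums
  set S1 : ℝ := ∑ m₁, ∑ m₁', ∑ m₂, ∑ z ∈ E2 m₁', P m₁ m₁' m₂ z with hS1
  set S2 : ℝ := ∑ m₁, ∑ m₁', ∑ m₂, ∑ z ∈ E2 m₁, P m₁ m₁' m₂ z with hS2
  set S3 : ℝ := ∑ m₁, ∑ m₁', ∑ m₂, ∑ z ∈ E1 m₂, P m₁ m₁' m₂ z with hS3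
  have hS1le : S1 ≤ (N₁:ℝ) * ((N₂:ℝ) * ((N₁:ℝ) * B)) := by
    rw [hS1]
    calc ∑ m₁, ∑ m₁', ∑ m₂, ∑ z ∈ E2 m₁', P m₁ m₁' m₂ z
        = ∑ m₁ : Fin N₁, ∑ m₂, ∑ m₁', ∑ z ∈ E2 m₁', P m₁ m₁' m₂ z := by
          exact Finset.sum_congr rfl fun m₁ _ => Finset.sum_comm
      _ ≤ ∑ m₁ : Fin N₁, ∑ m₂ : Fin N₂, (N₁:ℝ) * B := by
          refine Finset.sum_le_sum fun m₁ _ => Finset.sum_le_sum fun m₂ _ => ?_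
          exact hTerm1 m₁ m₂
      _ = (N₁:ℝ) * ((N₂:ℝ) * ((N₁:ℝ) * B)) := by
          simp [Finset.sum_const, Finset.card_univ, mul_comm, mul_assoc, mul_left_comm]
  have hS3le : S3 ≤ (N₁:ℝ) * ((N₁:ℝ) * ((N₂:ℝ) * A)) := by
    rw [hS3]
    calc ∑ m₁, ∑ m₁', ∑ m₂, ∑ z ∈ E1 m₂, P m₁ m₁' m₂ z
        ≤ ∑ m₁ : Fin N₁, ∑ m₁' : Fin N₁, (N₂:ℝ) * A := by
          refine Finset.sum_le_sum fun m₁ _ => Finset.sum_le_sum fun m₁' _ => ?_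
          exact hTerm3 m₁ m₁'
      _ = (N₁:ℝ) * ((N₁:ℝ) * ((N₂:ℝ) * A)) := by
          simp [Finset.sum_const, Finset.card_univ, mul_comm, mul_assoc, mul_left_comm]
  have hS21 : S2 = S1 := by
    rw [hS1, hS2, Finset.sum_comm]
    exact Finset.sum_congr rfl fun a _ => Finset.sum_congr rfl fun b _ =>
      Finset.sum_congr rfl fun m₂ _ => Finset.sum_congr rfl fun z _ => hPsym b a m₂ z
  -- counting lower bound
  have hCount : (N₁:ℝ) * ((N₁:ℝ) - 1) * (N₂:ℝ) ≤ S2 + S1 + S3 := by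
    have hsplit : S2 + S1 + S3
        = ∑ m₁, ∑ m₁', ∑ m₂, (∑ z ∈ E2 m₁, P m₁ m₁' m₂ z
            + ∑ z ∈ E2 m₁', P m₁ m₁' m₂ z + ∑ z ∈ E1 m₂, P m₁ m₁' m₂ z) := by
      rw [hS1, hS2, hS3]
      simp [Finset.sum_add_distrib]
    rw [hsplit]
    have hrow : ∀ m₁ : Fin N₁,
        ∑ m₁' : Fin N₁, (if m₁ = m₁' then (0:ℝ) else 1) = (N₁:ℝ) - 1 := by
      intro m₁
      have h1 : ∀ m₁' : Fin N₁, (if m₁ = m₁' then (0:ℝ) else 1)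
          = 1 - (if m₁ = m₁' then (1:ℝ) else 0) := by
        intro m₁'; split <;> norm_num
      simp only [h1, Finset.sum_sub_distrib, Finset.sum_const, Finset.card_univ,
        Fintype.card_fin, Finset.sum_ite_eq, Finset.mem_univ, if_pos, nsmul_eq_mul,
        mul_one]
    calc (N₁:ℝ) * ((N₁:ℝ) - 1) * (N₂:ℝ)
        = ∑ m₁ : Fin N₁, ∑ m₁' : Fin N₁, ∑ _m₂ : Fin N₂,
            (if m₁ = m₁' then (0:ℝ) else 1) := by
          have hcol : ∀ m₁ : Fin N₁, ∑ m₁' : Fin N₁, ∑ _m₂ : Fin N₂,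
              (if m₁ = m₁' then (0:ℝ) else 1) = (N₂:ℝ) * ((N₁:ℝ) - 1) := by
            intro m₁
            simp only [Finset.sum_const, Finset.card_univ, Fintype.card_fin,
              nsmul_eq_mul]
            rw [← Finset.mul_sum, hrow m₁]
          rw [Finset.sum_congr rfl fun m₁ _ => hcol m₁, Finset.sum_const,
            Finset.card_univ, Fintype.card_fin, nsmul_eq_mul]
          ring
      _ ≤ _ := by
          refine Finset.sum_le_sum fun m₁ _ => Finset.sum_le_sum fun m₁' _ =>
            Finset.sum_le_sum fun m₂ _ => ?_
          by_cases hne : m₁ = m₁'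
          · rw [if_pos hne]
            have t1 := Finset.sum_nonneg fun z (_ : z ∈ E2 m₁) => hPnn m₁ m₁' m₂ z
            have t2 := Finset.sum_nonneg fun z (_ : z ∈ E2 m₁') => hPnn m₁ m₁' m₂ z
            have t3 := Finset.sum_nonneg fun z (_ : z ∈ E1 m₂) => hPnn m₁ m₁' m₂ z
            linarith
          · rw [if_neg hne]
            exact hCover m₁ m₁' hne m₂
  -- assemble
  have hfinal : (N₁:ℝ) * ((N₁:ℝ) - 1) * (N₂:ℝ)
      ≤ (N₁:ℝ) * (N₁:ℝ) * (N₂:ℝ) * (2 * B + A) := by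
    rw [hS21] at hCount
    nlinarith [hS1le, hS3le]
  have hN₁2 : (2:ℝ) ≤ (N₁:ℝ) := by exact_mod_cast hN₁
  have hAB : (1:ℝ)/2 ≤ 2 * B + A := by
    nlinarith [mul_pos hN₁pos hN₂pos, mul_pos (mul_pos hN₁pos hN₁pos) hN₂pos]
  have hAle : A ≤ max A B := le_max_left A B
  have hBle : B ≤ max A B := le_max_right A B
  nlinarith [hAB, hAle, hBle]
end

section
/- Averaging trick for spoofing kernels: let W be a MAC and suppose for channels P_{Y|X̃Ỹ} and P_{Y'|XỸ} we have max_{x,x̃,ỹ,z} | Σ_y P_{Y|X̃Ỹ}(y|x̃,ỹ)W(z|x,y) − Σ_{y'} P_{Y'|XỸ}(y'|x,ỹ)W(z|x̃,y') | < ζ. Then the averaged kernel Q(y|a,ỹ) := (P_{Y|X̃Ỹ}(y|a,ỹ) + P_{Y'|XỸ}(y|a,ỹ))/2 satisfies max_{x,x̃,ỹ,z} | Σ_y Q(y|x̃,ỹ)W(z|x,y) − Σ_{y'} Q(y'|x,ỹ)W(z|x̃,y') | < ζ. Equivalently: if for every single kernel Q the quantity max_{x,x̃,ỹ,z}|Σ_y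 Q(y|x̃,ỹ)W(z|x,y) − Σ_y Q(y|x,ỹ)W(z|x̃,y)| exceeds ζ, then for every pair of kernels (P_{Y|X̃Ỹ}, P_{Y'|XỸ}), max_{x,x̃,ỹ,z}|Σ_y P_{Y|X̃Ỹ}(y|x̃,ỹ)W(z|x,y) − Σ_{y'} P_{Y'|XỸ}(y'|x,ỹ)W(z|x̃,y')| ≥ ζ. -/
/-- averaging trick for spoofing kernels. If the pair of kernels
(P_{Y|X̃Ỹ}, P_{Y'|XỸ}) achieves deviation < ζ uniformly, then so does the single
averaged kernel Q(y|a,ỹ) = (P_{Y|X̃Ỹ}(y|a,ỹ) + P_{Y'|XỸ}(y|a,ỹ))/2.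
`P a yt y` denotes P_{Y|X̃Ỹ}(y|a,ỹ); `P' a yt y` denotes P_{Y'|XỸ}(y|a,ỹ). -/
theorem averaged_kernel_spoofing
    {𝒳 𝒴 𝒵 : Type*} [Fintype 𝒳] [Fintype 𝒴] [Fintype 𝒵]
    (W : 𝒳 → 𝒴 → 𝒵 → ℝ)
    (hW0 : ∀ x y z, 0 ≤ W x y z) (hW1 : ∀ x y, ∑ z, W x y z = 1)
    (P P' : 𝒳 → 𝒴 → 𝒴 → ℝ)
    (hP0 : ∀ a yt y, 0 ≤ P a yt y) (hP1 : ∀ a yt, ∑ y, P a yt y = 1)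
    (hP'0 : ∀ a yt y, 0 ≤ P' a yt y) (hP'1 : ∀ a yt, ∑ y, P' a yt y = 1)
    (ζ : ℝ)
    (hdev : ∀ x xt yt z,
      |(∑ y, P xt yt y * W x y z) - (∑ y', P' x yt y' * W xt y' z)| < ζ) :
    ∀ x xt yt z,
      |(∑ y, ((P xt yt y + P' xt yt y) / 2) * W x y z) -
       (∑ y', ((P x yt y' + P' x yt y') / 2) * W xt y' z)| < ζ := by
  intro x xt yt z
  have h1 := hdev x xt yt z
  have h2 := hdev xt x yt z
  set A := (∑ y, P xt yt y * W x y z) - (∑ y', P' x yt y' * W xt y' z) with hA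
  set B := (∑ y, P x yt y * W xt y z) - (∑ y', P' xt yt y' * W x y' z) with hB
  have key : (∑ y, ((P xt yt y + P' xt yt y) / 2) * W x y z) -
      (∑ y', ((P x yt y' + P' x yt y') / 2) * W xt y' z) = (A + -B) / 2 := by
    simp only [div_mul_eq_mul_div, add_mul, ← Finset.sum_div, Finset.sum_add_distrib]
    rw [hA, hB]; ring
  rw [key]
  calc |(A + -B) / 2| = |A + -B| / 2 := by rw [abs_div]; norm_num
    _ ≤ (|A| + |-B|) / 2 := by gcongr; exact abs_add_le _ _
    _ = (|A| + |B|) / 2 := by rw [abs_neg]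
    _ < ζ := by linarith
end

section
/- Csiszár–Narayan large deviation lemma: let Z₁, …, Z_N be arbitrary random variables and let fᵢ(Z₁,…,Zᵢ) be functions with 0 ≤ fᵢ ≤ 1 for i = 1,…,N. If E[fᵢ(Z₁,…,Zᵢ) | Z₁,…,Z_{i−1}] ≤ a almost surely for each i, then for every t, P{ (1/N) Σ_{i=1}^N fᵢ(Z₁,…,Zᵢ) > t } ≤ exp₂( −N(t − a·log₂ e) ). -/
open MeasureTheory

lemma exp_log_two_mul_le {x : ℝ} (hx0 : 0 ≤ x) (hx1 : x ≤ 1) :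
    Real.exp (Real.log 2 * x) ≤ 1 + x := by
  have h := convexOn_exp.2 (Set.mem_univ (0:ℝ)) (Set.mem_univ (Real.log 2))
    (by linarith : (0:ℝ) ≤ 1 - x) hx0 (by ring)
  simp only [smul_eq_mul, mul_zero, zero_add, Real.exp_zero,
    Real.exp_log (by norm_num : (0:ℝ) < 2)] at h
  calc Real.exp (Real.log 2 * x) = Real.exp (x * Real.log 2) := by ring_nf
    _ ≤ (1-x) * 1 + x * 2 := h
    _ = 1 + x := by ring

/-- Csiszár–Narayan Lemma A1: if `Z₁, …, Z_N` are arbitrary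
random variables, `gᵢ = fᵢ(Z₁,…,Zᵢ)` takes values in [0,1] (formalized by `g i`
being measurable w.r.t. the σ-algebra generated by `Z j, j ≤ i`), and
`E[gᵢ | Z₁,…,Z_{i-1}] ≤ a` a.s. for each `i`, then
`P{(1/N) Σᵢ gᵢ > t} ≤ 2^{-N(t - a log₂ e)}`. -/
theorem csiszar_narayan_A1
    {Ω : Type*} [m0 : MeasurableSpace Ω] (μ : Measure Ω) [IsProbabilityMeasure μ]
    (N : ℕ) (S : Fin N → Type*) [∀ i, MeasurableSpace (S i)]
    (Z : ∀ i, Ω → S i) (hZ : ∀ i, Measurable (Z i))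
    (g : Fin N → Ω → ℝ)
    (hg01 : ∀ i ω, 0 ≤ g i ω ∧ g i ω ≤ 1)
    -- gᵢ is a function of Z₁,…,Zᵢ
    (hadapted : ∀ i, Measurable[⨆ j, ⨆ _ : j ≤ i, MeasurableSpace.comap (Z j) inferInstance] (g i))
    (a t : ℝ)
    (hcond : ∀ i, ∀ᵐ ω ∂μ,
      (μ[g i | ⨆ j, ⨆ _ : j < i, MeasurableSpace.comap (Z j) inferInstance]) ω ≤ a) :
    μ {ω | t < (1 / (N : ℝ)) * ∑ i, g i ω} ≤
      ENNReal.ofReal ((2 : ℝ) ^ (-(N : ℝ) * (t - a * Real.logb 2 (Real.exp 1)))) := by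
  classical
  rcases Nat.eq_zero_or_pos N with hN0 | hN
  · subst hN0
    simp only [Nat.cast_zero, neg_zero, zero_mul, Real.rpow_zero, ENNReal.ofReal_one]
    exact prob_le_one
  have hlog2 : (0:ℝ) < Real.log 2 := Real.log_pos (by norm_num)
  -- the filtration
  set m : ℕ → MeasurableSpace Ω := fun n =>
    ⨆ j : Fin N, ⨆ _ : (j : ℕ) < n, MeasurableSpace.comap (Z j) inferInstance with hm_def
  have hm_le : ∀ n, m n ≤ m0 := fun n => iSup₂_le fun j _ => (hZ j).comap_le
  have hm_mono : ∀ {p q : ℕ}, p ≤ q → m p ≤ m q := fun {p q} hpq =>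
    iSup₂_le fun j hj =>
      le_iSup₂ (f := fun (j : Fin N) (_ : (j:ℕ) < q) => MeasurableSpace.comap (Z j) inferInstance)
        j (lt_of_lt_of_le hj hpq)
  have hcond' : ∀ i : Fin N, ∀ᵐ ω ∂μ, (μ[g i | m (i : ℕ)]) ω ≤ a := fun i => hcond i
  have hg_m : ∀ i : Fin N, Measurable[m ((i:ℕ)+1)] (g i) := fun i =>
    (hadapted i).mono
      (iSup₂_le fun j hj =>
        le_iSup₂ (f := fun (j : Fin N) (_ : (j:ℕ) < (i:ℕ)+1) => MeasurableSpace.comap (Z j) inferInstance)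
          j (Nat.lt_succ_of_le hj)) le_rfl
  -- extension of g to ℕ
  set G : ℕ → Ω → ℝ := fun k ω => if hk : k < N then g ⟨k, hk⟩ ω else 0 with hG_def
  have hG0 : ∀ k ω, 0 ≤ G k ω := by
    intro k ω; simp only [hG_def]; split
    · exact (hg01 _ ω).1
    · exact le_rfl
  have hG1 : ∀ k ω, G k ω ≤ 1 := by
    intro k ω; simp only [hG_def]; split
    · exact (hg01 _ ω).2
    · exact zero_le_one
  have hG_m : ∀ k n, k < n → Measurable[m n] (G k) := by
    intro k n hkn
    by_cases hk : k < N
    · simp only [hG_def, dif_pos hk]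
      exact (hg_m ⟨k, hk⟩).mono (hm_mono hkn) le_rfl
    · simp only [hG_def, dif_neg hk]
      exact measurable_const
  -- the product process
  set P : ℕ → Ω → ℝ := fun n ω => Real.exp (Real.log 2 * ∑ k ∈ Finset.range n, G k ω) with hP_def
  have hP_succ : ∀ n, P (n+1) = fun ω => P n ω * Real.exp (Real.log 2 * G n ω) := by
    intro n; funext ω
    simp only [hP_def, Finset.sum_range_succ, mul_add, Real.exp_add]
  have hP1 : ∀ n ω, 1 ≤ P n ω := by
    intro n ω
    rw [hP_def]
    refine Real.one_le_exp (mul_nonneg hlog2.le ?_)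
    exact Finset.sum_nonneg fun k _ => hG0 k ω
  have hP_bdd : ∀ n ω, P n ω ≤ 2 ^ n := by
    intro n ω
    have hsum : ∑ k ∈ Finset.range n, G k ω ≤ n := by
      calc ∑ k ∈ Finset.range n, G k ω ≤ ∑ k ∈ Finset.range n, 1 :=
            Finset.sum_le_sum fun k _ => hG1 k ω
        _ = n := by simp
    calc P n ω ≤ Real.exp (Real.log 2 * n) := Real.exp_le_exp.mpr
          (mul_le_mul_of_nonneg_left hsum hlog2.le)
      _ = 2 ^ n := by
          rw [mul_comm, Real.exp_nat_mul, Real.exp_log (by norm_num : (0:ℝ) < 2)]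
  have hP_m : ∀ n, Measurable[m n] (P n) := by
    intro n
    apply Real.measurable_exp.comp
    apply Measurable.const_mul
    exact Finset.measurable_sum _ fun k hk => hG_m k n (Finset.mem_range.mp hk)
  have hP_meas0 : ∀ n, Measurable (P n) := fun n => (hP_m n).mono (hm_le n) le_rfl
  -- integrability helper
  have int_of : ∀ (f : Ω → ℝ) (C : ℝ), Measurable f → (∀ ω, |f ω| ≤ C) → Integrable f μ :=
    fun f C hf hC => (integrable_const C).mono' hf.aestronglyMeasurable
      (Filter.Eventually.of_forall fun ω => by simpa [Real.norm_eq_abs] using hC ω)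
  have hP_int : ∀ n, Integrable (P n) μ := fun n =>
    int_of _ (2^n) (hP_meas0 n) fun ω =>
      abs_le.mpr ⟨by
        have h1 := hP1 n ω
        have h2 : (0:ℝ) < 2^n := by positivity
        linarith, hP_bdd n ω⟩
  -- a ≥ 0
  have hae_neBot : (Filter.NeBot (ae μ)) := ae_neBot.mpr (IsProbabilityMeasure.ne_zero μ)
  have ha0 : 0 ≤ a := by
    have h1 : 0 ≤ᵐ[μ] μ[g ⟨0, hN⟩ | m 0] :=
      condExp_nonneg (Filter.Eventually.of_forall fun ω => (hg01 _ ω).1)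
    obtain ⟨ω, hω1, hω2⟩ := (h1.and (hcond' ⟨0, hN⟩)).exists
    exact le_trans hω1 hω2
  -- main induction
  have key : ∀ n, n ≤ N → ∫ ω, P n ω ∂μ ≤ (1+a)^n := by
    intro n hn
    induction n with
    | zero => simp [hP_def]
    | succ n ih =>
      have hnN : n < N := hn
      have ih' := ih (le_of_lt hnN)
      set i : Fin N := ⟨n, hnN⟩ with hi_def
      have hGn : G n = g i := by simp only [hG_def, dif_pos hnN, hi_def]
      set h : Ω → ℝ := fun ω => Real.exp (Real.log 2 * g i ω) with hh_def
      have hh1 : ∀ ω, 1 ≤ h ω := fun ω =>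
        Real.one_le_exp (mul_nonneg hlog2.le (hg01 i ω).1)
      have hh2 : ∀ ω, h ω ≤ 2 := by
        intro ω
        calc h ω ≤ 1 + g i ω := exp_log_two_mul_le (hg01 i ω).1 (hg01 i ω).2
          _ ≤ 2 := by linarith [(hg01 i ω).2]
      have hh_meas : Measurable h :=
        Real.measurable_exp.comp (((hg_m i).mono (hm_le _) le_rfl).const_mul _)
      have hh_int : Integrable h μ := int_of _ 2 hh_meas fun ω =>
        abs_le.mpr ⟨by linarith [hh1 ω], hh2 ω⟩
      have hPsucc : P (n+1) = P n * h := by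
        rw [hP_succ n]; funext ω; simp [hGn, hh_def]
      have hmul_int : Integrable (P n * h) μ := by
        refine int_of _ (2^n * 2) (fun s hs => ?_) fun ω => ?_
        · exact ((hP_meas0 n).mul hh_meas) hs
        · rw [Pi.mul_apply, abs_mul]
          have h1 := hP1 n ω
          have h2 := hP_bdd n ω
          have h3 := hh1 ω
          have h4 := hh2 ω
          rw [abs_of_nonneg (by linarith), abs_of_nonneg (by linarith)]
          exact mul_le_mul h2 h4 (by linarith) (by positivity)
      -- pull-out property
      have pull : μ[P n * h | m n] =ᵐ[μ] P n * μ[h | m n] :=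
        condExp_mul_of_stronglyMeasurable_left (hP_m n).stronglyMeasurable hmul_int hh_int
      -- conditional bound on h
      have hg_int : Integrable (fun ω => 1 + g i ω) μ :=
        int_of _ 2 (measurable_const.add ((hg_m i).mono (hm_le _) le_rfl))
          fun ω => abs_le.mpr ⟨by linarith [(hg01 i ω).1], by linarith [(hg01 i ω).2]⟩
      have hcb : μ[h | m n] ≤ᵐ[μ] fun _ => 1 + a := by
        have h1 : μ[h | m n] ≤ᵐ[μ] μ[(fun ω => 1 + g i ω) | m n] :=
          condExp_mono hh_int hg_int (Filter.Eventually.of_forall fun ω =>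
            exp_log_two_mul_le (hg01 i ω).1 (hg01 i ω).2)
        have hgi_int : Integrable (g i) μ :=
          int_of _ 1 ((hg_m i).mono (hm_le _) le_rfl)
            fun ω => abs_le.mpr ⟨by linarith [(hg01 i ω).1], (hg01 i ω).2⟩
        have h2 : μ[(fun ω => 1 + g i ω) | m n] =ᵐ[μ]
            fun ω => 1 + (μ[g i | m n]) ω := by
          have h2' := condExp_add (μ := μ) (m := m n) (f := fun _ : Ω => (1:ℝ))
            (g := g i) (integrable_const (1:ℝ)) hgi_int
          rw [condExp_const (hm_le n)] at h2'
          exact h2'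
        filter_upwards [h1, h2, hcond' i] with ω hω1 hω2 hω3
        calc (μ[h | m n]) ω ≤ _ := hω1
          _ = 1 + (μ[g i | m n]) ω := hω2
          _ ≤ 1 + a := by linarith
      -- putting it together
      have step : ∫ ω, P (n+1) ω ∂μ ≤ (∫ ω, P n ω ∂μ) * (1+a) := by
        rw [hPsucc]
        rw [← integral_condExp (hm_le n) (f := P n * h)]
        have hle : μ[P n * h | m n] ≤ᵐ[μ] fun ω => P n ω * (1+a) := by
          filter_upwards [pull, hcb] with ω hω1 hω2
          rw [hω1, Pi.mul_apply]
          exact mul_le_mul_of_nonneg_left hω2 (by linarith [hP1 n ω])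
        calc ∫ ω, (μ[P n * h | m n]) ω ∂μ ≤ ∫ ω, P n ω * (1+a) ∂μ :=
              integral_mono_ae integrable_condExp ((hP_int n).mul_const _) hle
          _ = (∫ ω, P n ω ∂μ) * (1+a) := integral_mul_const _ _
      calc ∫ ω, P (n+1) ω ∂μ ≤ (∫ ω, P n ω ∂μ) * (1+a) := step
        _ ≤ (1+a)^n * (1+a) := mul_le_mul_of_nonneg_right ih' (by linarith)
        _ = (1+a)^(n+1) := by ring
  -- final bound on the integral
  have hPN_int : ∫ ω, P N ω ∂μ ≤ Real.exp (a * N) := by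
    refine (key N le_rfl).trans ?_
    calc (1+a)^N ≤ (Real.exp a)^N :=
          pow_le_pow_left₀ (by linarith) (by linarith [Real.add_one_le_exp a]) N
      _ = Real.exp (a * N) := by rw [← Real.exp_nat_mul]; ring_nf
  -- Markov
  set c : ℝ := Real.exp (Real.log 2 * ((N:ℝ) * t)) with hc_def
  have hc : 0 < c := Real.exp_pos _
  have hset : {ω | t < (1 / (N:ℝ)) * ∑ i, g i ω} ⊆ {ω | c ≤ P N ω} := by
    intro ω hω
    rw [Set.mem_setOf_eq] at hω
    have hNpos : (0:ℝ) < N := Nat.cast_pos.mpr hN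
    have hNt : (N:ℝ) * t < ∑ i, g i ω := by
      have := (mul_lt_mul_iff_right₀ hNpos).mpr hω
      rw [← mul_assoc, mul_one_div, div_self hNpos.ne', one_mul] at this
      exact this
    have hsum : ∑ k ∈ Finset.range N, G k ω = ∑ i, g i ω := by
      rw [← Fin.sum_univ_eq_sum_range (fun k => G k ω) N]
      refine Finset.sum_congr rfl fun j _ => ?_
      simp only [hG_def, dif_pos j.isLt, Fin.eta]
    show c ≤ P N ω
    simp only [hP_def]
    rw [hsum]
    exact le_of_lt (Real.exp_lt_exp.mpr (by nlinarith))
  have hgoal_eq : ENNReal.ofReal ((2:ℝ) ^ (-(N:ℝ) * (t - a * Real.logb 2 (Real.exp 1))))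
      = ENNReal.ofReal (Real.exp (a * N) / c) := by
    congr 1
    rw [Real.rpow_def_of_pos (by norm_num : (0:ℝ) < 2), hc_def, ← Real.exp_sub]
    congr 1
    rw [Real.logb, Real.log_exp]
    field_simp
    ring
  rw [hgoal_eq]
  calc μ {ω | t < (1 / (N:ℝ)) * ∑ i, g i ω} ≤ μ {ω | c ≤ P N ω} := measure_mono hset
    _ ≤ (∫⁻ ω, ENNReal.ofReal (P N ω) ∂μ) / ENNReal.ofReal c := by
        have : {ω | c ≤ P N ω} = {ω | ENNReal.ofReal c ≤ ENNReal.ofReal (P N ω)} := by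
          ext ω; simp [ENNReal.ofReal_le_ofReal_iff (le_trans zero_le_one (hP1 N ω))]
        rw [this]
        exact meas_ge_le_lintegral_div ((hP_meas0 N).ennreal_ofReal).aemeasurable
          (by simp [hc]) ENNReal.ofReal_ne_top
    _ = ENNReal.ofReal (∫ ω, P N ω ∂μ) / ENNReal.ofReal c := by
        rw [← ofReal_integral_eq_lintegral_ofReal (hP_int N)
          (Filter.Eventually.of_forall fun ω => le_trans zero_le_one (hP1 N ω))]
    _ ≤ ENNReal.ofReal (Real.exp (a * N)) / ENNReal.ofReal c :=
        ENNReal.div_le_div_right (ENNReal.ofReal_le_ofReal hPN_int) _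
    _ = ENNReal.ofReal (Real.exp (a * N) / c) := by
        rw [ENNReal.ofReal_div_of_pos hc]
end
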